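/- arXiv:math/0009131 — 4 statements merged into one kernel-verified Lean document; each statement's English description precedes it below -/
import Mathlib

section
/- For every n ≥ 1, applying the adjoint action of the operator [Δ′, p_1] = Σ_{j≥1} j p_{j+1} ∂/∂p_j iterated (n−1) times to the multiplication operator p_1 yields (n−1)! times the multiplication operator p_n; that is, ad([Δ′, p_1])^{n−1}(p_1) = (n−1)! p_n as operators on P. -/
/-!
`Δ′` is a second-order operator killing every `p_m`, so by the second-order Leibniz rule
`[Δ′, p_m]` keeps only the two cross terms `i j p_{i+j} (∂_i p_m) ∂_j`, which agree after
swapping `i` and `j`: `[Δ′, p_m]` is the derivation `Σ_j m j p_{m+j} ∂_j`.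
For a derivation `D`, `ad(D)` sends the multiplication operator `a` to `D a`; since
`[Δ′, p_1] p_k = k p_{k+1}`, induction on `k` gives `ad([Δ′, p_1])^k (p_1) = k! p_{k+1}`.
-/

noncomputable section

open MvPolynomial

/-- Goulden's operator `Δ′ = (1/2) Σ_{i,j≥1} i j p_{i+j} ∂/∂p_i ∂/∂p_j`
on `P = ℚ[p_1, p_2, …]`, where `p_i := X i`. -/
def Delta' (f : MvPolynomial ℕ ℚ) : MvPolynomial ℕ ℚ :=
  (1 / 2 : ℚ) • ∑ᶠ (i : ℕ) (j : ℕ),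
    ((i : ℚ) * (j : ℚ)) • (X (i + j) * pderiv i (pderiv j f))

/-- The commutator `[A, B] = A ∘ B - B ∘ A` of two operators on `P`. -/
def opComm (A B : MvPolynomial ℕ ℚ → MvPolynomial ℕ ℚ) :
    MvPolynomial ℕ ℚ → MvPolynomial ℕ ℚ :=
  fun f => A (B f) - B (A f)

/-- The operator of multiplication by the variable `p_m`. -/
def mulP (m : ℕ) : MvPolynomial ℕ ℚ → MvPolynomial ℕ ℚ := fun f => X m * f

namespace MvPolynomial

variable {σ R : Type*} [CommSemiring R]

theorem vars_pderiv_subset (j : σ) (f : MvPolynomial σ R) : (pderiv j f).vars ⊆ f.vars := by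
  classical
  intro i hi
  obtain ⟨s, hs, his⟩ := (mem_vars_iff_mem_support i).1 hi
  rw [mem_support_iff, coeff_pderiv] at hs
  refine (mem_vars_iff_mem_support i).2
    ⟨s + Finsupp.single j 1, mem_support_iff.2 (left_ne_zero_of_mul hs), ?_⟩
  rw [Finsupp.mem_support_iff] at his ⊢
  simp only [Finsupp.add_apply]
  omega

theorem mkDerivation_eq_sum_pderiv (v : σ → MvPolynomial σ R) {f : MvPolynomial σ R}
    {T : Finset σ} (hT : f.vars ⊆ T) :
    mkDerivation R v f = ∑ j ∈ T, v j * pderiv j f := by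
  classical
  have hsum : ∀ g, (∑ j ∈ T, v j • pderiv j : Derivation R _ _) g =
      ∑ j ∈ T, v j * pderiv j g := by
    intro g
    simp only [← Derivation.coeFnAddMonoidHom_apply, map_sum, Finset.sum_apply]
    rfl
  rw [← hsum]
  refine derivation_eq_of_forall_mem_vars fun i hi => ?_
  simp [hsum, pderiv_X, Pi.single_apply, hT hi]

theorem pderiv_pderiv_X_mul (i j m : σ) (f : MvPolynomial σ R) :
    pderiv i (pderiv j (X m * f)) =
      X m * pderiv i (pderiv j f) + pderiv j (X m) * pderiv i f + pderiv i (X m) * pderiv j f := by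
  classical
  simp only [pderiv_mul, map_add, pderiv_X, Pi.single_apply]
  split_ifs <;> simp <;> ring

end MvPolynomial

lemma Delta'_eq_sum {f : MvPolynomial ℕ ℚ} {T : Finset ℕ} (hT : f.vars ⊆ T) :
    Delta' f = (1 / 2 : ℚ) • ∑ i ∈ T, ∑ j ∈ T,
      ((i : ℚ) * j) • (X (i + j) * pderiv i (pderiv j f)) := by
  have hvanish : ∀ i j, i ∉ T ∨ j ∉ T → pderiv i (pderiv j f) = 0 := by
    rintro i j (hi | hj)
    · exact pderiv_eq_zero_of_notMem_vars fun h => hi (hT (vars_pderiv_subset j f h))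
    · rw [pderiv_eq_zero_of_notMem_vars fun h => hj (hT h), map_zero]
  rw [Delta']
  congr 1
  rw [finsum_congr fun i => finsum_eq_sum_of_support_subset _ <|
    Function.support_subset_iff'.2 fun j hj => by simp [hvanish i j (.inr hj)]]
  exact finsum_eq_sum_of_support_subset _ <|
    Function.support_subset_iff'.2 fun i hi => by simp [hvanish i _ (.inl hi)]

lemma opComm_Delta'_mulP (m : ℕ) :
    opComm Delta' (mulP m) =
      ⇑(mkDerivation ℚ (fun j => (m * j : ℚ) • X (m + j) : ℕ → MvPolynomial ℕ ℚ)) := by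
  funext f
  set T := insert m f.vars
  have hf : f.vars ⊆ T := Finset.subset_insert m f.vars
  have hmf : (X m * f).vars ⊆ T := (vars_mul _ _).trans <| by
    rw [vars_X]; exact Finset.union_subset (by simp [T]) hf
  simp only [opComm, mulP]
  rw [Delta'_eq_sum hmf, Delta'_eq_sum hf, mkDerivation_eq_sum_pderiv _ hf]
  have hswap : ∑ i ∈ T, ((i : ℚ) * m) • (X (i + m) * pderiv i f) =
      ∑ j ∈ T, ((m : ℚ) * j) • (X (m + j) * pderiv j f) := by
    simp_rw [mul_comm _ (m : ℚ), add_comm _ m]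
  have hsplit :
      ∑ i ∈ T, ∑ j ∈ T, ((i : ℚ) * j) • (X (i + j) * pderiv i (pderiv j (X m * f))) =
      X m * ∑ i ∈ T, ∑ j ∈ T, ((i : ℚ) * j) • (X (i + j) * pderiv i (pderiv j f)) +
        (2 : ℚ) • ∑ j ∈ T, ((m : ℚ) * j) • (X (m + j) * pderiv j f) := by
    simp only [pderiv_pderiv_X_mul, pderiv_X, Pi.single_apply, mul_add, smul_add,
      Finset.sum_add_distrib, Finset.mul_sum, mul_smul_comm, mul_left_comm (X m)]
    simp [T, hswap, two_smul, add_assoc]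
  rw [hsplit, mul_smul_comm, smul_add, add_sub_cancel_left, smul_smul]
  norm_num [smul_mul_assoc]

lemma opComm_derivation_smul_mul (D : Derivation ℚ (MvPolynomial ℕ ℚ) (MvPolynomial ℕ ℚ))
    (c : ℚ) (a : MvPolynomial ℕ ℚ) :
    opComm D (fun f => c • (a * f)) = fun f => c • (D a * f) := by
  funext f
  simp only [opComm, Derivation.map_smul, Derivation.leibniz, smul_eq_mul]
  rw [smul_add, add_sub_cancel_left, mul_comm]

lemma iterate_opComm_mulP_one (k : ℕ) :
    (opComm (opComm Delta' (mulP 1)))^[k] (mulP 1) =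
      fun f => (k.factorial : ℚ) • (X (k + 1) * f) := by
  induction k with
  | zero => funext f; simp [mulP]
  | succ k ih =>
    rw [Function.iterate_succ_apply', ih, opComm_Delta'_mulP, opComm_derivation_smul_mul,
      mkDerivation_X]
    funext f
    rw [smul_mul_assoc, smul_smul, Nat.factorial_succ, add_comm 1]
    push_cast
    rw [one_mul, mul_comm]

/-- For every `n ≥ 1`, applying `ad([Δ′, p_1])` iterated `n - 1` times to the
multiplication operator `p_1` yields `(n-1)!` times the multiplication
operator `p_n`: `ad([Δ′, p_1])^{n-1}(p_1) = (n-1)! p_n` as operators on `P`. -/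
theorem ad_iter_commutator (n : ℕ) (hn : 1 ≤ n) :
    (opComm (opComm Delta' (mulP 1)))^[n - 1] (mulP 1) =
      fun f => ((n - 1).factorial : ℚ) • (X n * f) := by
  obtain ⟨k, rfl⟩ := Nat.exists_eq_add_of_le hn
  simpa [add_comm 1 k] using iterate_opComm_mulP_one k

end
end

section
/- For every n ≥ 1, the component P_n of conformal weight n of the polynomial ring P satisfies P_n = Δ′(P_n) + p_1 · P_{n−1}; that is, every element of P_n can be written as a sum of an element in the image of Δ′ restricted to P_n and a product of p_1 with an element of P_{n−1}. -/
noncomputable section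

open MvPolynomial

/-- `P_n`: the span of all monomials `p_1^{α_1} ⋯ p_s^{α_s}` of conformal
weight `Σ_i i·α_i = n` (the variable `X 0` is not used in `P = ℚ[p_1, p_2, …]`). -/
def weightSpace (n : ℕ) : Submodule ℚ (MvPolynomial ℕ ℚ) :=
  Submodule.span ℚ {x | ∃ m : ℕ →₀ ℕ, m 0 = 0 ∧
    (m.sum fun i k => i * k) = n ∧ x = monomial m 1}

namespace GouldenAux

open Finsupp

/-- conformal weight of an exponent vector -/
def W (m : ℕ →₀ ℕ) : ℕ := m.sum fun i k => i * k

lemma W_add (a b : ℕ →₀ ℕ) : W (a + b) = W a + W b :=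
  Finsupp.sum_add_index (by simp) (by intro i _ k l; ring)

lemma W_single (i k : ℕ) : W (single i k) = i * k :=
  Finsupp.sum_single_index (by simp)

lemma monomial_mem {n : ℕ} {m : ℕ →₀ ℕ} (h0 : m 0 = 0) (hw : W m = n) :
    monomial m (1:ℚ) ∈ weightSpace n :=
  Submodule.subset_span ⟨m, h0, hw, rfl⟩

lemma monomial_smul_one (m : ℕ →₀ ℕ) (c : ℚ) :
    monomial m c = c • monomial m (1:ℚ) := by rw [smul_monomial]; norm_num

lemma monomial_mem' {n : ℕ} {m : ℕ →₀ ℕ} (c : ℚ) (h0 : m 0 = 0) (hw : W m = n) :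
    monomial m c ∈ weightSpace n := by
  rw [monomial_smul_one]
  exact Submodule.smul_mem _ _ (monomial_mem h0 hw)

lemma vars_pderiv_subset (j : ℕ) (f : MvPolynomial ℕ ℚ) :
    (pderiv j f).vars ⊆ f.vars := by
  classical
  conv_lhs => rw [f.as_sum]
  rw [map_sum]
  refine (vars_sum_subset _ _).trans ?_
  intro i hi
  simp only [Finset.mem_biUnion] at hi
  obtain ⟨m, hm, him⟩ := hi
  rw [pderiv_monomial] at him
  have h1 : (monomial (m - single j 1) (coeff m f * (m j : ℚ))).vars
      ⊆ (m - single j 1).support := by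
    by_cases h : (coeff m f * (m j : ℚ)) = 0
    · simp [h, vars_monomial]
    · rw [vars_monomial h]
  have h2 := h1 him
  rw [Finsupp.mem_support_iff] at h2
  have h3 : (m - single j 1 : ℕ →₀ ℕ) i ≤ m i := by
    rw [Finsupp.tsub_apply]; exact Nat.sub_le _ _
  have : m i ≠ 0 := by omega
  exact (mem_vars i).2 ⟨m, hm, Finsupp.mem_support_iff.2 this⟩

lemma Delta'_eq_sum {f : MvPolynomial ℕ ℚ} {V : Finset ℕ} (hV : f.vars ⊆ V) :
    Delta' f = (1 / 2 : ℚ) • ∑ i ∈ V, ∑ j ∈ V,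
      ((i : ℚ) * (j : ℚ)) • (X (i + j) * pderiv i (pderiv j f)) := by
  unfold Delta'
  congr 1
  have inner : ∀ i : ℕ, ∑ᶠ (j : ℕ), ((i : ℚ) * (j : ℚ)) • (X (i + j) * pderiv i (pderiv j f))
      = ∑ j ∈ V, ((i : ℚ) * (j : ℚ)) • (X (i + j) * pderiv i (pderiv j f)) := by
    intro i
    refine finsum_eq_sum_of_support_subset _ ?_
    intro j hj
    by_contra hjV
    apply hj
    have : pderiv j f = 0 := pderiv_eq_zero_of_notMem_vars (fun h => hjV (hV h))
    simp [this]
  rw [finsum_congr inner]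
  refine finsum_eq_sum_of_support_subset _ ?_
  intro i hi
  by_contra hiV
  apply hi
  have hz : ∀ j : ℕ, pderiv i (pderiv j f) = 0 := by
    intro j
    exact pderiv_eq_zero_of_notMem_vars (fun h => hiV (hV (vars_pderiv_subset j f h)))
  simp [hz]

lemma Delta'_zero : Delta' (0 : MvPolynomial ℕ ℚ) = 0 := by
  rw [Delta'_eq_sum (V := ∅) (by simp [vars_0])]
  simp

lemma Delta'_add (f g : MvPolynomial ℕ ℚ) : Delta' (f + g) = Delta' f + Delta' g := by
  classical
  set V : Finset ℕ := f.vars ∪ g.vars ∪ (f + g).vars with hV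
  rw [Delta'_eq_sum (V := V) (by intro x hx; simp [hV, hx]),
    Delta'_eq_sum (V := V) (f := f) (by intro x hx; simp [hV, hx]),
    Delta'_eq_sum (V := V) (f := g) (by intro x hx; simp [hV, hx])]
  rw [← smul_add]
  congr 1
  rw [← Finset.sum_add_distrib]
  refine Finset.sum_congr rfl fun i _ => ?_
  rw [← Finset.sum_add_distrib]
  refine Finset.sum_congr rfl fun j _ => ?_
  rw [map_add, map_add, mul_add, smul_add]

lemma Delta'_smul (c : ℚ) (f : MvPolynomial ℕ ℚ) : Delta' (c • f) = c • Delta' f := by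
  classical
  set V : Finset ℕ := f.vars ∪ (c • f).vars with hV
  rw [Delta'_eq_sum (V := V) (by intro x hx; simp [hV, hx]),
    Delta'_eq_sum (V := V) (f := f) (by intro x hx; simp [hV, hx])]
  rw [smul_comm]
  congr 1
  rw [Finset.smul_sum]
  refine Finset.sum_congr rfl fun i _ => ?_
  rw [Finset.smul_sum]
  refine Finset.sum_congr rfl fun j _ => ?_
  rw [Derivation.map_smul, Derivation.map_smul, smul_comm c, mul_smul_comm]

lemma term_eq (m : ℕ →₀ ℕ) (i j : ℕ) :
    ((i:ℚ)*(j:ℚ)) • (X (i+j) * pderiv i (pderiv j (monomial m (1:ℚ))))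
    = monomial (m - single j 1 - single i 1 + single (i+j) 1)
        ((i:ℚ) * (j:ℚ) * ((m j : ℕ) : ℚ) * (((m - single j 1 : ℕ →₀ ℕ) i : ℕ) : ℚ)) := by
  rw [pderiv_monomial, pderiv_monomial, X, monomial_mul, smul_monomial]
  rw [add_comm (Finsupp.single (i+j) 1)]
  rw [smul_eq_mul]; ring_nf

lemma Delta'_monomial (m : ℕ →₀ ℕ) :
    Delta' (monomial m (1:ℚ)) = (1 / 2 : ℚ) • ∑ i ∈ m.support, ∑ j ∈ m.support,
      monomial (m - single j 1 - single i 1 + single (i+j) 1)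
        ((i:ℚ) * (j:ℚ) * ((m j : ℕ) : ℚ) * (((m - single j 1 : ℕ →₀ ℕ) i : ℕ) : ℚ)) := by
  rw [Delta'_eq_sum (V := m.support) (by rw [vars_monomial one_ne_zero])]
  congr 1
  exact Finset.sum_congr rfl fun i _ => Finset.sum_congr rfl fun j _ => term_eq m i j

lemma decomp {m : ℕ →₀ ℕ} {i j : ℕ} (hj : m j ≠ 0) (hi : (m - single j 1 : ℕ →₀ ℕ) i ≠ 0) :
    (m - single j 1 - single i 1) + single i 1 + single j 1 = m := by
  have h1 : single j 1 ≤ m := by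
    rw [Finsupp.single_le_iff]; omega
  have h2 : single i 1 ≤ m - single j 1 := by
    rw [Finsupp.single_le_iff]; omega
  rw [tsub_add_cancel_of_le h2, tsub_add_cancel_of_le h1]

lemma term_mem {n : ℕ} {m : ℕ →₀ ℕ} (h0 : m 0 = 0) (hw : W m = n) (i j : ℕ) :
    monomial (m - single j 1 - single i 1 + single (i+j) 1)
        ((i:ℚ) * (j:ℚ) * ((m j : ℕ) : ℚ) * (((m - single j 1 : ℕ →₀ ℕ) i : ℕ) : ℚ))
      ∈ weightSpace n := by
  by_cases hc : (i:ℚ) * (j:ℚ) * ((m j : ℕ) : ℚ) * (((m - single j 1 : ℕ →₀ ℕ) i : ℕ) : ℚ) = 0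
  · rw [hc, monomial_zero]; exact Submodule.zero_mem _
  · have hi0 : i ≠ 0 := by rintro rfl; simp at hc
    have hj0 : j ≠ 0 := by rintro rfl; simp at hc
    have hmj : m j ≠ 0 := by rintro h; rw [h] at hc; simp at hc
    have hmi : (m - single j 1 : ℕ →₀ ℕ) i ≠ 0 := by
      intro h; rw [h] at hc; simp at hc
    set s : ℕ →₀ ℕ := m - single j 1 - single i 1 with hs
    have hd : s + single i 1 + single j 1 = m := decomp hmj hmi
    refine monomial_mem' _ ?_ ?_
    · have hsm : s 0 ≤ m 0 := by
        have : s ≤ m := le_trans tsub_le_self tsub_le_self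
        exact this 0
      have : s 0 = 0 := by omega
      simp [Finsupp.add_apply, this, Finsupp.single_apply, Nat.add_eq_zero, hi0, hj0]
    · rw [W_add, W_single, ← hw, ← hd, W_add, W_add, W_single, W_single]
      ring

lemma Delta'_mem {n : ℕ} {g : MvPolynomial ℕ ℚ} (hg : g ∈ weightSpace n) :
    Delta' g ∈ weightSpace n := by
  refine Submodule.span_induction ?_ ?_ ?_ ?_ hg
  · rintro x ⟨m, h0, hw, rfl⟩
    rw [Delta'_monomial]
    exact Submodule.smul_mem _ _ (Submodule.sum_mem _ fun i _ =>
      Submodule.sum_mem _ fun j _ => term_mem h0 hw i j)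
  · rw [Delta'_zero]; exact Submodule.zero_mem _
  · intro x y _ _ hx hy; rw [Delta'_add]; exact Submodule.add_mem _ hx hy
  · intro c x _ hx; rw [Delta'_smul]; exact Submodule.smul_mem _ _ hx

lemma X1_mul_mem {n : ℕ} (hn : 1 ≤ n) {h : MvPolynomial ℕ ℚ}
    (hh : h ∈ weightSpace (n-1)) : X 1 * h ∈ weightSpace n := by
  refine Submodule.span_induction ?_ ?_ ?_ ?_ hh
  · rintro x ⟨m, h0, hw, rfl⟩
    have hX : (X 1 : MvPolynomial ℕ ℚ) * monomial m 1 = monomial (single 1 1 + m) 1 := by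
      rw [X, monomial_mul, one_mul]
    rw [hX]
    refine monomial_mem (by simp [Finsupp.add_apply, h0, Finsupp.single_apply]) ?_
    rw [W_add, W_single]
    have : W m = n - 1 := hw
    omega
  · rw [mul_zero]; exact Submodule.zero_mem _
  · intro x y _ _ hx hy; rw [mul_add]; exact Submodule.add_mem _ hx hy
  · intro c x _ hx; rw [mul_smul_comm]; exact Submodule.smul_mem _ _ hx

/-- The submodule of elements expressible as `Δ′ g + p_1 h`. -/
def T (n : ℕ) : Submodule ℚ (MvPolynomial ℕ ℚ) where
  carrier := {f | ∃ g ∈ weightSpace n, ∃ h ∈ weightSpace (n-1), f = Delta' g + X 1 * h}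
  zero_mem' := ⟨0, Submodule.zero_mem _, 0, Submodule.zero_mem _, by
    rw [Delta'_zero, mul_zero, add_zero]⟩
  add_mem' := by
    rintro a b ⟨g1, hg1, h1, hh1, rfl⟩ ⟨g2, hg2, h2, hh2, rfl⟩
    exact ⟨g1 + g2, Submodule.add_mem _ hg1 hg2, h1 + h2, Submodule.add_mem _ hh1 hh2, by
      rw [Delta'_add, mul_add]; ring⟩
  smul_mem' := by
    rintro c a ⟨g, hg, h, hh, rfl⟩
    exact ⟨c • g, Submodule.smul_mem _ _ hg, c • h, Submodule.smul_mem _ _ hh, by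
      rw [Delta'_smul, smul_add, mul_smul_comm]⟩

lemma Delta'_mem_T {n : ℕ} {g : MvPolynomial ℕ ℚ} (hg : g ∈ weightSpace n) :
    Delta' g ∈ T n :=
  ⟨g, hg, 0, Submodule.zero_mem _, by rw [mul_zero, add_zero]⟩

lemma key (n : ℕ) (hn : 1 ≤ n) : ∀ K : ℕ, ∀ m : ℕ →₀ ℕ, m 0 = 0 → W m = n →
    (∃ t ≤ K, m t ≠ 0) → monomial m (1:ℚ) ∈ T n := by
  intro K
  induction K with
  | zero =>
    rintro m h0 _ ⟨t, ht, hmt⟩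
    interval_cases t
    exact absurd h0 hmt
  | succ k IH =>
    intro m h0 hw hex
    by_cases hsm : ∃ t ≤ k, m t ≠ 0
    · exact IH m h0 hw hsm
    push_neg at hsm
    obtain ⟨t, ht, hmt⟩ := hex
    have htk : t = k + 1 := by
      by_contra h
      exact hmt (hsm t (by omega))
    have hK : m (k+1) ≠ 0 := htk ▸ hmt
    rcases Nat.eq_zero_or_pos k with hk0 | hkpos
    · -- k = 0 : m 1 ≠ 0, pull out X 1
      subst hk0
      have hK1 : m 1 ≠ 0 := by simpa using hK
      have h1le : single 1 1 ≤ m := by rw [Finsupp.single_le_iff]; omega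
      have hdec : (m - single 1 1) + single 1 1 = m := tsub_add_cancel_of_le h1le
      have hWm : W (m - single 1 1) = n - 1 := by
        have h2 := congrArg W hdec
        rw [W_add, W_single, hw] at h2
        omega
      have h0m : (m - single 1 1 : ℕ →₀ ℕ) 0 = 0 := by
        have : (m - single 1 1 : ℕ →₀ ℕ) 0 ≤ m 0 := tsub_le_self (α := ℕ →₀ ℕ) 0
        omega
      refine ⟨0, Submodule.zero_mem _, monomial (m - single 1 1) 1,
        monomial_mem h0m hWm, ?_⟩
      rw [Delta'_zero, zero_add, X, monomial_mul, one_mul, add_comm, hdec]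
    · -- main case : all parts of m are ≥ k+1 ≥ 2
      have hk1 : k + 1 ≠ 1 := by omega
      set a : ℕ →₀ ℕ := m - single (k+1) 1 with ha
      have haK : a + single (k+1) 1 = m :=
        tsub_add_cancel_of_le (by rw [Finsupp.single_le_iff]; omega)
      have ha_le : ∀ t, a t ≤ m t := fun t => tsub_le_self (α := ℕ →₀ ℕ) t
      have ha_small : ∀ t ≤ k, a t = 0 := by
        intro t htk'
        have := ha_le t
        have := hsm t htk'
        omega
      set m' : ℕ →₀ ℕ := a + single k 1 + single 1 1 with hm'
      have hWm' : W m' = n := by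
        have h1 := congrArg W haK
        rw [W_add, W_single] at h1
        rw [hm', W_add, W_add, W_single, W_single]
        omega
      have h0m' : m' 0 = 0 := by
        have h1 := ha_small 0 (by omega)
        simp [hm', Finsupp.add_apply, h1, Finsupp.single_apply]
        omega
      have hg : monomial m' (1:ℚ) ∈ weightSpace n := monomial_mem h0m' hWm'
      -- values of m' at 1 and k
      have hm'1 : m' 1 = (if k = 1 then 2 else 1) := by
        have h1 := ha_small 1 hkpos
        simp [hm', Finsupp.add_apply, h1, Finsupp.single_apply]
        split_ifs <;> omega
      have hm'k : m' k = (if k = 1 then 2 else 1) := by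
        have h1 := ha_small k le_rfl
        simp [hm', Finsupp.add_apply, h1, Finsupp.single_apply]
        split_ifs <;> omega
      have h1V : 1 ∈ m'.support := by
        rw [Finsupp.mem_support_iff, hm'1]; split <;> omega
      have hkV : k ∈ m'.support := by
        rw [Finsupp.mem_support_iff, hm'k]; split <;> omega
      -- rewrite Delta' of the generator as a sum over pairs
      classical
      set G : ℕ × ℕ → MvPolynomial ℕ ℚ := fun p =>
        monomial (m' - single p.2 1 - single p.1 1 + single (p.1 + p.2) 1)
          ((p.1 : ℚ) * (p.2 : ℚ) * ((m' p.2 : ℕ) : ℚ)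
            * (((m' - single p.2 1 : ℕ →₀ ℕ) p.1 : ℕ) : ℚ)) with hG
      have hDg : Delta' (monomial m' (1:ℚ))
          = (1 / 2 : ℚ) • ∑ p ∈ m'.support ×ˢ m'.support, G p := by
        rw [Delta'_monomial, Finset.sum_product]
      set E : Finset (ℕ × ℕ) := {(1, k), (k, 1)} with hEdef
      have hE : E ⊆ m'.support ×ˢ m'.support := by
        intro p hp
        rw [hEdef] at hp
        rcases Finset.mem_insert.1 hp with rfl | hp
        · exact Finset.mem_product.2 ⟨h1V, hkV⟩
        · rw [Finset.mem_singleton.1 hp]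
          exact Finset.mem_product.2 ⟨hkV, h1V⟩
      have hsdiff := Finset.sum_sdiff (f := G) hE
      -- auxiliary subtraction identities
      have hma : m' - single 1 1 = a + single k 1 := by
        rw [hm', add_tsub_cancel_right]
      have hmk : m' - single k 1 = a + single 1 1 := by
        rw [hm', add_right_comm, add_tsub_cancel_right]
      have ha1 : a 1 = 0 := ha_small 1 hkpos
      have hak : a k = 0 := ha_small k le_rfl
      -- the sum over E is (2k) • monomial m 1
      have hsumE : ∑ p ∈ E, G p = ((2 * k : ℕ) : ℚ) • monomial m (1:ℚ) := by
        by_cases hk1 : k = 1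
        · subst hk1
          have hsingle : E = {((1:ℕ), (1:ℕ))} := by rw [hEdef]; rfl
          rw [hsingle, Finset.sum_singleton, hG]
          simp only
          rw [hma, add_tsub_cancel_right]
          have hco : (m' 1 : ℚ) = 2 := by rw [hm'1]; norm_num
          have hco2 : ((a + single 1 1 : ℕ →₀ ℕ) 1 : ℚ) = 1 := by
            simp [Finsupp.add_apply, ha1]
          rw [hco, hco2, haK, monomial_smul_one]
          norm_num
        · have hne : ((1:ℕ), k) ≠ (k, (1:ℕ)) := by
            simp [Prod.ext_iff]
            intro h; omega
          rw [hEdef, Finset.sum_pair hne, hG]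
          simp only
          have hco1 : (m' 1 : ℚ) = 1 := by rw [hm'1]; simp [hk1]
          have hcok : (m' k : ℚ) = 1 := by rw [hm'k]; simp [hk1]
          have hca : ((m' - single k 1 : ℕ →₀ ℕ) 1 : ℚ) = 1 := by
            rw [hmk]
            simp [Finsupp.add_apply, ha1, Finsupp.single_apply, hk1]
          have hcb : ((m' - single 1 1 : ℕ →₀ ℕ) k : ℚ) = 1 := by
            rw [hma]
            simp [Finsupp.add_apply, hak, Finsupp.single_apply]
          have hexp1 : m' - single k 1 - single 1 1 + single (1 + k) 1 = m := by
            rw [hmk, add_tsub_cancel_right, Nat.add_comm 1 k, haK]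
          have hexp2 : m' - single 1 1 - single k 1 + single (k + 1) 1 = m := by
            rw [hma, add_tsub_cancel_right, haK]
          rw [hexp1, hexp2, hco1, hcok, hca, hcb, ← map_add, monomial_smul_one]
          push_cast
          ring_nf
      -- every term outside E lies in T n
      have hdiffmem : ∀ p ∈ (m'.support ×ˢ m'.support) \ E, G p ∈ T n := by
        rintro ⟨i, j⟩ hp
        have hpE : ((i, j) : ℕ × ℕ) ∉ E := (Finset.mem_sdiff.1 hp).2
        have hA : ¬(i = 1 ∧ j = k) := by
          rintro ⟨rfl, rfl⟩
          exact hpE (by rw [hEdef]; exact Finset.mem_insert_self _ _)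
        have hB : ¬(i = k ∧ j = 1) := by
          rintro ⟨rfl, rfl⟩
          exact hpE (by rw [hEdef]; exact Finset.mem_insert_of_mem (Finset.mem_singleton_self _))
        rw [hG]
        simp only
        by_cases hc : (i : ℚ) * (j : ℚ) * ((m' j : ℕ) : ℚ)
            * (((m' - single j 1 : ℕ →₀ ℕ) i : ℕ) : ℚ) = 0
        · rw [hc, monomial_zero]; exact Submodule.zero_mem _
        · have hi0 : i ≠ 0 := by rintro rfl; simp at hc
          have hj0 : j ≠ 0 := by rintro rfl; simp at hc
          have hmj : m' j ≠ 0 := by rintro h; rw [h] at hc; simp at hc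
          have hmi : (m' - single j 1 : ℕ →₀ ℕ) i ≠ 0 := by
            intro h; rw [h] at hc; simp at hc
          set s : ℕ →₀ ℕ := m' - single j 1 - single i 1 with hs
          have hd : s + single i 1 + single j 1 = m' := decomp hmj hmi
          have hs0 : s 0 = 0 := by
            have h1 : s ≤ m' := le_trans tsub_le_self tsub_le_self
            have := h1 0
            omega
          have h0'' : (s + single (i + j) 1 : ℕ →₀ ℕ) 0 = 0 := by
            simp [Finsupp.add_apply, hs0, Finsupp.single_apply]
            omega
          have hw'' : W (s + single (i + j) 1) = n := by
            have h1 := congrArg W hd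
            rw [W_add, W_add, W_single, W_single] at h1
            rw [W_add, W_single]
            omega
          have ht'' : ∃ t ≤ k, (s + single (i + j) 1 : ℕ →₀ ℕ) t ≠ 0 := by
            by_cases hc1 : (s + single (i + j) 1 : ℕ →₀ ℕ) 1 ≠ 0
            · exact ⟨1, hkpos, hc1⟩
            by_cases hck : (s + single (i + j) 1 : ℕ →₀ ℕ) k ≠ 0
            · exact ⟨k, le_rfl, hck⟩
            exfalso
            push_neg at hc1 hck
            have e1 : s 1 + ((if i = 1 then 1 else 0) + (if j = 1 then 1 else 0)) = m' 1 := by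
              have := congrArg (fun f : ℕ →₀ ℕ => f 1) hd
              simpa [Finsupp.add_apply, Finsupp.single_apply, add_assoc] using this
            have ek : s k + ((if i = k then 1 else 0) + (if j = k then 1 else 0)) = m' k := by
              have := congrArg (fun f : ℕ →₀ ℕ => f k) hd
              simpa [Finsupp.add_apply, Finsupp.single_apply, add_assoc] using this
            have f1 := hc1
            have fk := hck
            rw [Finsupp.add_apply, Finsupp.single_apply] at f1 fk
            rw [hm'1] at e1
            rw [hm'k] at ek
            split_ifs at e1 ek f1 fk <;> omega
          have hT : monomial (s + single (i + j) 1) (1:ℚ) ∈ T n := IH _ h0'' hw'' ht''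
          rw [monomial_smul_one]
          exact Submodule.smul_mem _ _ hT
      -- assemble
      have hdiffT : ∑ p ∈ (m'.support ×ˢ m'.support) \ E, G p ∈ T n :=
        Submodule.sum_mem _ hdiffmem
      have hDgT : Delta' (monomial m' (1:ℚ)) ∈ T n := Delta'_mem_T hg
      have htot : (2 : ℚ) • Delta' (monomial m' (1:ℚ))
          = ∑ p ∈ m'.support ×ˢ m'.support, G p := by
        rw [hDg, smul_smul]
        norm_num
      have hmu : ((2 * k : ℕ) : ℚ) • monomial m (1:ℚ)
          = (2 : ℚ) • Delta' (monomial m' (1:ℚ))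
            - ∑ p ∈ (m'.support ×ˢ m'.support) \ E, G p := by
        rw [htot, ← hsdiff, ← hsumE]
        abel
      have h2k : ((2 * k : ℕ) : ℚ) ≠ 0 := by
        rw [Nat.cast_ne_zero]
        omega
      have : monomial m (1:ℚ)
          = (((2 * k : ℕ) : ℚ))⁻¹ • (((2 * k : ℕ) : ℚ) • monomial m (1:ℚ)) := by
        rw [smul_smul, inv_mul_cancel₀ h2k, one_smul]
      rw [this, hmu]
      exact Submodule.smul_mem _ _
        (Submodule.sub_mem _ (Submodule.smul_mem _ _ hDgT) hdiffT)

end GouldenAux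

/-- For every `n ≥ 1`, `P_n = Δ′(P_n) + p_1 · P_{n-1}`: every element of `P_n`
is a sum of an element of the image of `Δ′` restricted to `P_n` and a product
of `p_1` with an element of `P_{n-1}`, and conversely all such sums lie
in `P_n`. -/
theorem weightSpace_decomposition (n : ℕ) (hn : 1 ≤ n) :
    (∀ f ∈ weightSpace n, ∃ g ∈ weightSpace n, ∃ h ∈ weightSpace (n - 1),
      f = Delta' g + X 1 * h) ∧
    (∀ g ∈ weightSpace n, ∀ h ∈ weightSpace (n - 1),
      Delta' g + X 1 * h ∈ weightSpace n) := by
  constructor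
  · intro f hf
    have : f ∈ GouldenAux.T n := by
      refine Submodule.span_le.2 ?_ hf
      rintro x ⟨m, h0, hw, rfl⟩
      have hm0 : m ≠ 0 := by
        rintro rfl
        simp [GouldenAux.W, Finsupp.sum_zero_index] at hw
        omega
      obtain ⟨t, hmt⟩ : ∃ t, m t ≠ 0 := by
        by_contra h
        push_neg at h
        exact hm0 (Finsupp.ext h)
      exact GouldenAux.key n hn t m h0 hw ⟨t, le_rfl, hmt⟩
    exact this
  · intro g hg h hh
    exact Submodule.add_mem _ (GouldenAux.Delta'_mem hg) (GouldenAux.X1_mul_mem hn hh)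

end
end

section
/- For every n ≥ 1, the space of rational class functions on S_n decomposes as C(S_n) ⊗ ℚ = τ_n ∪ (C(S_n) ⊗ ℚ) + r_1(C(S_{n−1}) ⊗ ℚ); that is, every rational class function on S_n is a sum of a cup product of τ_n with a rational class function on S_n and the image under r_1 of a rational class function on S_{n−1}. -/
noncomputable section

/-- `permDeg π` is the minimal number of transpositions whose product is `π`. -/
def permDeg {n : ℕ} (π : Equiv.Perm (Fin n)) : ℕ :=
  sInf {d | ∃ l : List (Equiv.Perm (Fin n)),
    (∀ t ∈ l, t.IsSwap) ∧ l.prod = π ∧ l.length = d}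

/-- The cup product on the group ring, extended bilinearly from
`σ ∪ π = σπ` if `deg σ + deg π = deg (σπ)` and `0` otherwise. -/
def cup {n : ℕ} (f g : MonoidAlgebra ℚ (Equiv.Perm (Fin n))) :
    MonoidAlgebra ℚ (Equiv.Perm (Fin n)) :=
  f.coeff.sum fun σ a => g.coeff.sum fun π b =>
    if permDeg σ + permDeg π = permDeg (σ * π)
    then MonoidAlgebra.single (σ * π) (a * b) else 0

/-- `tau n` is the sum of all transpositions in `S_n`, as an element of `ℚ[S_n]`. -/
def tau (n : ℕ) : MonoidAlgebra ℚ (Equiv.Perm (Fin n)) :=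
  letI := Classical.decPred (Equiv.Perm.IsSwap : Equiv.Perm (Fin n) → Prop)
  ∑ σ ∈ Finset.univ.filter (fun σ : Equiv.Perm (Fin n) => σ.IsSwap),
    MonoidAlgebra.single σ (1 : ℚ)

/-- The standard inclusion `S_n ⊂ S_{n+1}` (permutations fixing the last letter). -/
def iotaPerm (n : ℕ) (π : Equiv.Perm (Fin n)) : Equiv.Perm (Fin (n + 1)) :=
  π.viaFintypeEmbedding Fin.castSuccEmb

/-- The induced map `ι : ℚ[S_n] → ℚ[S_{n+1}]`. -/
def iota (n : ℕ) (f : MonoidAlgebra ℚ (Equiv.Perm (Fin n))) :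
    MonoidAlgebra ℚ (Equiv.Perm (Fin (n + 1))) :=
  MonoidAlgebra.ofCoeff (Finsupp.mapDomain (iotaPerm n) f.coeff)

/-- `f ∈ ℚ[S_n]` is a class function if its coefficients are constant on
conjugacy classes. -/
def IsClassFun {n : ℕ} (f : MonoidAlgebra ℚ (Equiv.Perm (Fin n))) : Prop :=
  ∀ σ π : Equiv.Perm (Fin n), f.coeff (σ * π * σ⁻¹) = f.coeff π

/-- The map `r_1 : ℚ[S_n] → ℚ[S_{n+1}]`, `x ↦ (1/n!) Σ_{t ∈ S_{n+1}} t ι(x) t⁻¹`. -/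
def r1 (n : ℕ) (x : MonoidAlgebra ℚ (Equiv.Perm (Fin n))) :
    MonoidAlgebra ℚ (Equiv.Perm (Fin (n + 1))) :=
  (n.factorial : ℚ)⁻¹ • ∑ t : Equiv.Perm (Fin (n + 1)),
    MonoidAlgebra.single t 1 * iota n x * MonoidAlgebra.single t⁻¹ 1

/-!
Write `deg σ = N - #cycles(σ)`: multiplying by a transposition `(x y)` changes the number of
cycles by one, merging the cycles of `x` and `y` or splitting their common cycle. Class functions
are spanned by class indicators, so it suffices to show that every indicator `[g]` lies in
`W = τ ∪ C(S_{n+1}) + r₁ C(S_n)`. If `g` has a fixed point, `[g]` is a multiple of `r₁` of an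
indicator on `S_n`. Otherwise cut a point `z` out of a cycle of `g` of length `k`, giving
`π = (z g(z)) g`. The class function `τ ∪ [π]` lies in `W` and is nonzero at `g`, and every
other class in its support is that of some `(x y) π'` with `π' ~ π`. Such a permutation either
has a fixed point or keeps the `(k - 1)`-cycle of `π`, so induction on `k` concludes.
-/

open Equiv Finset

namespace Equiv.Perm

variable {α : Type*} [Fintype α] [DecidableEq α] {g h c : Perm α} {x y z u v w : α}

def orbitFinset (g : Perm α) (x : α) : Finset α := univ.filter (g.SameCycle x)

@[simp]
lemma mem_orbitFinset : v ∈ g.orbitFinset u ↔ g.SameCycle u v := by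
  simp [orbitFinset]

lemma SameCycle.orbitFinset_eq (h : g.SameCycle u v) : g.orbitFinset u = g.orbitFinset v := by
  ext w
  simp only [mem_orbitFinset]
  exact ⟨h.symm.trans, h.trans⟩

lemma card_orbitFinset_pos (g : Perm α) (u : α) : 0 < #(g.orbitFinset u) :=
  card_pos.2 ⟨u, mem_orbitFinset.2 .rfl⟩

lemma orbitFinset_eq_singleton (h : g u = u) : g.orbitFinset u = {u} := by
  ext v
  simp only [mem_orbitFinset, mem_singleton]
  exact ⟨fun hv => (hv.eq_of_left h).symm, fun hv => hv ▸ .rfl⟩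

lemma orbitFinset_conj (c g : Perm α) (u : α) :
    (c * g * c⁻¹).orbitFinset (c u) = (g.orbitFinset u).map c.toEmbedding := by
  ext v
  simp [sameCycle_conj]

lemma card_orbitFinset_conj (c g : Perm α) (u : α) :
    #((c * g * c⁻¹).orbitFinset (c u)) = #(g.orbitFinset u) := by
  rw [orbitFinset_conj, card_map]

lemma sameCycle_swap_mul_iff_of_not_sameCycle (hx : ¬g.SameCycle u x) (hy : ¬g.SameCycle u y) :
    (swap x y * g).SameCycle u v ↔ g.SameCycle u v := by
  have hpow : ∀ n : ℕ, ((swap x y * g) ^ n) u = (g ^ n) u := by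
    intro n
    induction n with
    | zero => rfl
    | succ n ih =>
      have hx' : (g ^ (n + 1)) u ≠ x := fun h => hx (h ▸ sameCycle_pow_right.2 .rfl)
      have hy' : (g ^ (n + 1)) u ≠ y := fun h => hy (h ▸ sameCycle_pow_right.2 .rfl)
      rw [pow_succ', mul_apply, ih, mul_apply, ← mul_apply g, ← pow_succ',
        swap_apply_of_ne_of_ne hx' hy']
  constructor
  · intro h
    obtain ⟨n, rfl⟩ := h.exists_nat_pow_eq
    rw [hpow]
    exact sameCycle_pow_right.2 .rfl
  · intro h
    obtain ⟨n, rfl⟩ := h.exists_nat_pow_eq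
    rw [← hpow]
    exact sameCycle_pow_right.2 .rfl

lemma sameCycle_swap_mul_of_sameCycle (hxy : ¬g.SameCycle x y) (hv : g.SameCycle x v) :
    (swap x y * g).SameCycle x v := by
  obtain ⟨n, rfl⟩ := hv.exists_nat_pow_eq
  clear hv
  induction n with
  | zero => exact .rfl
  | succ n ih =>
    rw [pow_succ', mul_apply]
    by_cases hx : g ((g ^ n) x) = x
    · rw [hx]
    · have hy : g ((g ^ n) x) ≠ y := fun h =>
        hxy (h ▸ sameCycle_apply_right.2 (sameCycle_pow_right.2 .rfl))
      refine ih.trans ⟨1, ?_⟩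
      rw [zpow_one, mul_apply, swap_apply_of_ne_of_ne hx hy]

lemma sameCycle_swap_mul_iff (hxy : ¬g.SameCycle x y) :
    (swap x y * g).SameCycle x v ↔ g.SameCycle x v ∨ g.SameCycle y v := by
  have hyx : ¬g.SameCycle y x := fun h => hxy h.symm
  have hjoin : (swap x y * g).SameCycle x y := by
    refine (sameCycle_swap_mul_of_sameCycle hxy (sameCycle_symm_apply_right.2 .rfl)).trans
      ⟨1, ?_⟩
    rw [zpow_one, mul_apply, apply_symm_apply, swap_apply_left]
  constructor
  · intro h
    by_contra! hv
    have := (sameCycle_swap_mul_iff_of_not_sameCycle (fun h => hv.1 h.symm)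
      (fun h => hv.2 h.symm)).1 h.symm
    exact hv.1 this.symm
  · rintro (h | h)
    · exact sameCycle_swap_mul_of_sameCycle hxy h
    · rw [swap_comm] at hjoin ⊢
      exact hjoin.trans (sameCycle_swap_mul_of_sameCycle hyx h)

lemma not_sameCycle_swap_mul (hne : x ≠ y) (hxy : g.SameCycle x y) :
    ¬(swap x y * g).SameCycle x y := by
  classical
  have hex : ∃ j, (g ^ j) x = y := hxy.exists_nat_pow_eq
  have hj : (g ^ Nat.find hex) x = y := Nat.find_spec hex
  have hmin : ∀ i < Nat.find hex, (g ^ i) x ≠ y := fun i hi => Nat.find_min hex hi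
  have hpos : 0 < Nat.find hex := Nat.pos_of_ne_zero fun h => hne (by rwa [h] at hj)
  -- the arc `x, g x, …` before the first visit to `y` is closed under `swap x y * g`
  set S := (range (Nat.find hex)).image fun i => (g ^ i) x
  have hS : ∀ w ∈ S, (swap x y * g) w ∈ S := by
    simp only [S, mem_image, mem_range]
    rintro _ ⟨i, hi, rfl⟩
    rw [mul_apply, ← mul_apply g, ← pow_succ']
    by_cases hij : i + 1 = Nat.find hex
    · exact ⟨0, hpos, by rw [hij, hj, swap_apply_right, pow_zero, one_apply]⟩
    · have hx : (g ^ (i + 1)) x ≠ x := fun h => by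
        have key :
            (g ^ (Nat.find hex - (i + 1))) ((g ^ (i + 1)) x) = (g ^ Nat.find hex) x := by
          rw [← mul_apply, ← pow_add, Nat.sub_add_cancel (by omega)]
        rw [h] at key
        exact hmin _ (by omega) (key.trans hj)
      exact ⟨i + 1, by omega, (swap_apply_of_ne_of_ne hx (hmin _ (by omega))).symm⟩
  have horbit : ∀ m : ℕ, ((swap x y * g) ^ m) x ∈ S := by
    intro m
    induction m with
    | zero => exact mem_image.2 ⟨0, mem_range.2 hpos, rfl⟩
    | succ m ih => rw [pow_succ', mul_apply]; exact hS _ ih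
  rintro h
  obtain ⟨m, hm⟩ := h.exists_nat_pow_eq
  obtain ⟨i, hi, hiy⟩ := mem_image.1 (hm ▸ horbit m)
  exact hmin i (mem_range.1 hi) hiy

/-- Counts the cycles of `g`, fixed points included: an orbit `O` contributes `#O` summands
`1 / #O`. -/
def numOrbits (g : Perm α) : ℚ := ∑ u, (#(g.orbitFinset u) : ℚ)⁻¹

lemma sum_inv_card_orbitFinset (g : Perm α) (x : α) :
    ∑ u ∈ g.orbitFinset x, (#(g.orbitFinset u) : ℚ)⁻¹ = 1 := by
  rw [sum_congr rfl fun u hu => by rw [← (mem_orbitFinset.1 hu).orbitFinset_eq], sum_const,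
    nsmul_eq_mul, mul_inv_cancel₀ (by exact_mod_cast (card_orbitFinset_pos g x).ne')]

lemma numOrbits_swap_mul_of_not_sameCycle (hxy : ¬g.SameCycle x y) :
    numOrbits (swap x y * g) + 1 = numOrbits g := by
  set S := (swap x y * g).orbitFinset x
  have hS : S = g.orbitFinset x ∪ g.orbitFinset y := by
    ext v
    simp [S, sameCycle_swap_mul_iff hxy]
  have hdisj : _root_.Disjoint (g.orbitFinset x) (g.orbitFinset y) :=
    disjoint_left.2 fun v hx hy => hxy ((mem_orbitFinset.1 hx).trans (mem_orbitFinset.1 hy).symm)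
  have hout : ∀ u ∉ S, (swap x y * g).orbitFinset u = g.orbitFinset u := by
    intro u hu
    simp only [hS, mem_union, mem_orbitFinset, not_or] at hu
    ext v
    simp only [mem_orbitFinset]
    exact sameCycle_swap_mul_iff_of_not_sameCycle (fun h => hu.1 h.symm) (fun h => hu.2 h.symm)
  have hg : ∑ u ∈ S, (#(g.orbitFinset u) : ℚ)⁻¹ = 2 := by
    rw [hS, sum_union hdisj, sum_inv_card_orbitFinset, sum_inv_card_orbitFinset]
    norm_num
  have hcompl : ∑ u ∈ Sᶜ, (#((swap x y * g).orbitFinset u) : ℚ)⁻¹ =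
      ∑ u ∈ Sᶜ, (#(g.orbitFinset u) : ℚ)⁻¹ :=
    sum_congr rfl fun u hu => by rw [hout u (mem_compl.1 hu)]
  unfold numOrbits
  rw [← sum_add_sum_compl S, ← sum_add_sum_compl S, sum_inv_card_orbitFinset, hg, hcompl]
  ring

lemma numOrbits_swap_mul_of_sameCycle (hne : x ≠ y) (hxy : g.SameCycle x y) :
    numOrbits (swap x y * g) = numOrbits g + 1 := by
  have h := numOrbits_swap_mul_of_not_sameCycle (not_sameCycle_swap_mul hne hxy)
  rw [swap_mul_self_mul] at h
  linarith

lemma numOrbits_one : numOrbits (1 : Perm α) = Fintype.card α := by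
  simp [numOrbits, orbitFinset_eq_singleton (one_apply _)]

lemma numOrbits_conj (c g : Perm α) : numOrbits (c * g * c⁻¹) = numOrbits g := by
  unfold numOrbits
  rw [← Equiv.sum_comp c]
  simp_rw [card_orbitFinset_conj]

lemma card_sub_numOrbits_le_length (l : List (Perm α)) (hl : ∀ t ∈ l, t.IsSwap) :
    Fintype.card α - numOrbits l.prod ≤ l.length := by
  induction l with
  | nil => simp [numOrbits_one]
  | cons t l ih =>
    obtain ⟨x, y, hne, rfl⟩ := hl t List.mem_cons_self
    have hstep : numOrbits l.prod - 1 ≤ numOrbits (swap x y * l.prod) := by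
      by_cases hxy : l.prod.SameCycle x y
      · rw [numOrbits_swap_mul_of_sameCycle hne hxy]
        linarith
      · linarith [numOrbits_swap_mul_of_not_sameCycle hxy]
    have := ih fun s hs => hl s (List.mem_cons_of_mem _ hs)
    rw [List.prod_cons, List.length_cons]
    push_cast
    linarith

lemma exists_isSwap_list_prod_eq (g : Perm α) : ∃ l : List (Perm α), (∀ t ∈ l, t.IsSwap) ∧
    l.prod = g ∧ (l.length : ℚ) = Fintype.card α - numOrbits g := by
  induction hg : #g.support using Nat.strong_induction_on generalizing g with
  | _ k ih =>
    by_cases h1 : g = 1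
    · exact ⟨[], by simp, by simp [h1], by simp [h1, numOrbits_one]⟩
    obtain ⟨x, hx⟩ : ∃ x, g x ≠ x := not_forall.1 fun h => h1 (Equiv.ext h)
    obtain ⟨l, hl, hprod, hlen⟩ :=
      ih _ (hg ▸ card_support_swap_mul hx) (swap x (g x) * g) rfl
    refine ⟨swap x (g x) :: l, ?_, ?_, ?_⟩
    · simp only [List.mem_cons, forall_eq_or_imp]
      exact ⟨⟨x, g x, hx.symm, rfl⟩, hl⟩
    · rw [List.prod_cons, hprod, swap_mul_self_mul]
    · rw [List.length_cons, Nat.cast_succ, hlen,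
        numOrbits_swap_mul_of_sameCycle hx.symm (sameCycle_apply_right.2 .rfl)]
      ring

lemma card_orbitFinset_swap_mul_apply (hz : g z ≠ z) :
    #((swap z (g z) * g).orbitFinset (g z)) + 1 = #(g.orbitFinset z) := by
  set π := swap z (g z) * g
  have hπ : π z = z := by simp [π]
  have hsplit : ¬π.SameCycle z (g z) :=
    not_sameCycle_swap_mul hz.symm (sameCycle_apply_right.2 .rfl)
  have horbit : g.orbitFinset z = insert z (π.orbitFinset (g z)) := by
    ext v
    have := sameCycle_swap_mul_iff (v := v) hsplit
    rw [swap_mul_self_mul] at this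
    rw [mem_orbitFinset, this, ← mem_orbitFinset, orbitFinset_eq_singleton hπ, mem_singleton,
      mem_insert, mem_orbitFinset]
  rw [horbit, card_insert_of_notMem fun h => hsplit (mem_orbitFinset.1 h).symm]

lemma isConj_swap_mul_swap_mul_of_sameCycle (hw : (swap z (g z) * g).SameCycle w (g z)) :
    IsConj (swap z w * (swap z (g z) * g)) g := by
  set π := swap z (g z) * g
  obtain ⟨m, hm⟩ := hw.exists_nat_pow_eq
  have hswap : π ^ m * swap z w * (π ^ m)⁻¹ = swap z (g z) := by
    rw [← swap_apply_apply, pow_apply_eq_self_of_apply_eq_self (by simp [π]), hm]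
  refine isConj_iff.2 ⟨π ^ m, ?_⟩
  calc π ^ m * (swap z w * π) * (π ^ m)⁻¹
      = π ^ m * swap z w * (π ^ m)⁻¹ * (π ^ m * π * (π ^ m)⁻¹) := by group
    _ = g := by rw [hswap, ← (Commute.self_pow π m).eq, mul_inv_cancel_right, swap_mul_self_mul]

lemma isConj_or_exists_card_orbitFinset_lt_of_apply_eq (hz : g z ≠ z)
    (hc : c * (swap z (g z) * g) * c⁻¹ = swap x y * h) (hcz : c z = x) :
    IsConj g h ∨ ∃ w, #(h.orbitFinset w) < #(g.orbitFinset z) := by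
  set π := swap z (g z) * g
  have hh : h = c * (swap z (c⁻¹ y) * π) * c⁻¹ := by
    have hxy : swap x y = c * swap z (c⁻¹ y) * c⁻¹ := by
      rw [← swap_apply_apply, hcz, ← mul_apply, mul_inv_cancel, one_apply]
    rw [← swap_mul_self_mul x y h, ← hc, hxy]
    group
  by_cases hw : π.SameCycle (c⁻¹ y) (g z)
  · exact .inl ((isConj_swap_mul_swap_mul_of_sameCycle hw).symm.trans
      (hh ▸ isConj_iff.2 ⟨c, rfl⟩))
  · -- the cycle of `π` through `g z`, one shorter than that of `z` in `g`, survives in `h`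
    right
    refine ⟨c (g z), ?_⟩
    have hsplit : ¬π.SameCycle (g z) z := fun h' =>
      not_sameCycle_swap_mul hz.symm (sameCycle_apply_right.2 .rfl) h'.symm
    have hx : ¬(swap x y * h).SameCycle (c (g z)) x := by
      rw [← hc, ← hcz, sameCycle_conj]
      simpa using hsplit
    have hy : ¬(swap x y * h).SameCycle (c (g z)) y := by
      rw [← hc, sameCycle_conj]
      simpa using fun h' => hw h'.symm
    have horbit : h.orbitFinset (c (g z)) = (swap x y * h).orbitFinset (c (g z)) := by
      ext v
      have := sameCycle_swap_mul_iff_of_not_sameCycle (v := v) hx hy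
      rwa [swap_mul_self_mul, ← mem_orbitFinset, ← mem_orbitFinset] at this
    have hcard : #(π.orbitFinset (g z)) + 1 = #(g.orbitFinset z) :=
      card_orbitFinset_swap_mul_apply hz
    rw [horbit, ← hc, card_orbitFinset_conj]
    omega

lemma exists_fixed_or_isConj_or_exists_card_orbitFinset_lt (hz : g z ≠ z)
    (hconj : IsConj (swap z (g z) * g) (swap x y * h)) :
    (∃ p, h p = p) ∨ IsConj g h ∨ ∃ w, #(h.orbitFinset w) < #(g.orbitFinset z) := by
  obtain ⟨c, hc⟩ := isConj_iff.1 hconj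
  by_cases hx : c z = x
  · exact .inr (isConj_or_exists_card_orbitFinset_lt_of_apply_eq hz hc hx)
  by_cases hy : c z = y
  · rw [swap_comm x y] at hc
    exact .inr (isConj_or_exists_card_orbitFinset_lt_of_apply_eq hz hc hy)
  refine .inl ⟨c z, ?_⟩
  have hfix : (swap x y * h) (c z) = c z := by
    rw [← hc]
    simp
  rwa [mul_apply, swap_apply_eq_iff, swap_apply_of_ne_of_ne hx hy] at hfix

end Equiv.Perm

section PermDeg

open Equiv.Perm

variable {N : ℕ}

theorem permDeg_eq_card_sub_numOrbits (g : Perm (Fin N)) :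
    (permDeg g : ℚ) = N - numOrbits g := by
  obtain ⟨l, hl, hprod, hlen⟩ := exists_isSwap_list_prod_eq g
  have hmem : l.length ∈ {d | ∃ l : List (Perm (Fin N)),
      (∀ t ∈ l, t.IsSwap) ∧ l.prod = g ∧ l.length = d} := ⟨l, hl, hprod, rfl⟩
  obtain ⟨l', hl', hprod', hlen'⟩ := Nat.sInf_mem ⟨_, hmem⟩
  rw [Fintype.card_fin] at hlen
  apply le_antisymm
  · rw [← hlen]
    exact_mod_cast Nat.sInf_le hmem
  · have := card_sub_numOrbits_le_length l' hl'
    rwa [hprod', Fintype.card_fin, hlen'] at this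

lemma permDeg_conj (c g : Perm (Fin N)) : permDeg (c * g * c⁻¹) = permDeg g := by
  have h := permDeg_eq_card_sub_numOrbits (c * g * c⁻¹)
  rw [numOrbits_conj, ← permDeg_eq_card_sub_numOrbits] at h
  exact_mod_cast h

lemma permDeg_swap_add_permDeg_swap_mul {g : Perm (Fin N)} {x y : Fin N} (hne : x ≠ y)
    (hxy : g.SameCycle x y) : permDeg (swap x y) + permDeg (swap x y * g) = permDeg g := by
  have hg := numOrbits_swap_mul_of_sameCycle hne hxy
  have hone := numOrbits_swap_mul_of_not_sameCycle (g := 1) (sameCycle_one.not.2 hne)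
  rw [mul_one, numOrbits_one, Fintype.card_fin] at hone
  have := permDeg_eq_card_sub_numOrbits (swap x y)
  have := permDeg_eq_card_sub_numOrbits (swap x y * g)
  have := permDeg_eq_card_sub_numOrbits g
  have : (permDeg (swap x y) + permDeg (swap x y * g) : ℚ) = permDeg g := by linarith
  exact_mod_cast this

end PermDeg

section GroupRing

open Equiv.Perm MonoidAlgebra

local notation "ℚ[" "𝔖" N "]" => MonoidAlgebra ℚ (Equiv.Perm (Fin N))

variable {N n : ℕ}

def classFunctions (N : ℕ) : Submodule ℚ ℚ[𝔖 N] where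
  carrier := {f | IsClassFun f}
  add_mem' ha hb σ π := by simp [ha σ π, hb σ π]
  zero_mem' _ _ := rfl
  smul_mem' q _ ha σ π := by simp [ha σ π]

lemma IsClassFun.coeff_eq_of_isConj {f : ℚ[𝔖 N]} (hf : IsClassFun f) {u v : Perm (Fin N)}
    (h : IsConj u v) : f.coeff u = f.coeff v := by
  obtain ⟨c, rfl⟩ := isConj_iff.1 h
  exact (hf c u).symm

def classIndicator (ρ : Perm (Fin N)) : ℚ[𝔖 N] := ∑ u with IsConj ρ u, single u 1

lemma classIndicator_coeff (ρ u : Perm (Fin N)) :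
    (classIndicator ρ).coeff u = if IsConj ρ u then 1 else 0 := by
  simp [classIndicator, coeff_sum, Finsupp.single_apply]

lemma isClassFun_classIndicator (ρ : Perm (Fin N)) : IsClassFun (classIndicator ρ) := by
  intro c u
  have h : IsConj u (c * u * c⁻¹) := isConj_iff.2 ⟨c, rfl⟩
  rw [classIndicator_coeff, classIndicator_coeff]
  exact if_congr ⟨fun h' => h'.trans h.symm, fun h' => h'.trans h⟩ rfl rfl

lemma IsClassFun.eq_sum_smul_classIndicator {f : ℚ[𝔖 N]} (hf : IsClassFun f) :
    f = ∑ u, (f.coeff u / #{v | IsConj u v}) • classIndicator u := by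
  ext w
  simp only [coeff_sum, Finset.sum_apply', coeff_smul, Finsupp.smul_apply, classIndicator_coeff,
    smul_eq_mul, mul_ite, mul_one, mul_zero, ← sum_filter]
  have hclass : ∀ u ∈ ({u | IsConj u w} : Finset _),
      f.coeff u / #{v | IsConj u v} = f.coeff w / #{v | IsConj w v} := by
    intro u hu
    have hu : IsConj u w := (mem_filter.1 hu).2
    rw [hf.coeff_eq_of_isConj hu, filter_congr fun v _ => ⟨hu.symm.trans, hu.trans⟩]
  have hcard : #({u | IsConj u w} : Finset _) = #({v | IsConj w v} : Finset _) := by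
    rw [filter_congr fun v _ => isConj_comm]
  have hpos : (#({v | IsConj w v} : Finset _) : ℚ) ≠ 0 := by
    exact_mod_cast (card_pos.2 ⟨w, mem_filter.2 ⟨mem_univ _, IsConj.refl w⟩⟩).ne'
  rw [sum_congr rfl hclass, sum_const, hcard, nsmul_eq_mul, mul_div_cancel₀ _ hpos]

lemma mem_of_isClassFun {W : Submodule ℚ ℚ[𝔖 N]} {f : ℚ[𝔖 N]} (hf : IsClassFun f)
    (h : ∀ u, f.coeff u ≠ 0 → classIndicator u ∈ W) : f ∈ W := by
  rw [hf.eq_sum_smul_classIndicator]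
  refine W.sum_mem fun u _ => ?_
  by_cases hu : f.coeff u = 0
  · simp [hu]
  · exact W.smul_mem _ (h u hu)

lemma classIndicator_mem_of_coeff_ne_zero {W : Submodule ℚ ℚ[𝔖 N]} {f : ℚ[𝔖 N]}
    (hf : IsClassFun f) (hfW : f ∈ W) {ρ : Perm (Fin N)} (hρ : f.coeff ρ ≠ 0)
    (h : ∀ u, f.coeff u ≠ 0 → ¬IsConj ρ u → classIndicator u ∈ W) :
    classIndicator ρ ∈ W := by
  set r := f - f.coeff ρ • classIndicator ρ
  have hr : IsClassFun r :=
    (classFunctions N).sub_mem hf ((classFunctions N).smul_mem _ (isClassFun_classIndicator ρ))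
  have hrW : r ∈ W := by
    refine mem_of_isClassFun hr fun u hu => ?_
    have hru : r.coeff u = f.coeff u - f.coeff ρ * if IsConj ρ u then 1 else 0 := by
      simp only [r, coeff_sub, coeff_smul, Finsupp.sub_apply, Finsupp.smul_apply, smul_eq_mul,
        classIndicator_coeff]
    by_cases hρu : IsConj ρ u
    · rw [hru, if_pos hρu, mul_one, hf.coeff_eq_of_isConj hρu, sub_self] at hu
      exact absurd rfl hu
    · rw [hru, if_neg hρu, mul_zero, sub_zero] at hu
      exact h u hu hρu
  have hmem : f.coeff ρ • classIndicator ρ ∈ W := by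
    simpa [r] using W.sub_mem hfW hrW
  simpa [smul_smul, inv_mul_cancel₀ hρ] using W.smul_mem (f.coeff ρ)⁻¹ hmem

lemma cup_coeff (f a : ℚ[𝔖 N]) (u : Perm (Fin N)) :
    (cup f a).coeff u = ∑ σ, if permDeg σ + permDeg (σ⁻¹ * u) = permDeg u
      then f.coeff σ * a.coeff (σ⁻¹ * u) else 0 := by
  rw [cup, Finsupp.sum_fintype _ _ fun _ => by simp, coeff_sum, Finset.sum_apply']
  refine sum_congr rfl fun σ _ => ?_
  rw [Finsupp.sum_fintype _ _ fun _ => by simp, coeff_sum, Finset.sum_apply',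
    sum_eq_single (σ⁻¹ * u)]
  · rw [mul_inv_cancel_left]
    split_ifs
    · rw [coeff_single, Finsupp.single_eq_same]
    · rfl
  · intro π _ hπ
    split_ifs
    · rw [coeff_single, Finsupp.single_eq_of_ne]
      rintro rfl
      exact hπ (inv_mul_cancel_left σ π).symm
    · rfl
  · simp

def cupLeft (f : ℚ[𝔖 N]) : ℚ[𝔖 N] →ₗ[ℚ] ℚ[𝔖 N] where
  toFun := cup f
  map_add' a b := by
    ext u
    simp only [cup_coeff, coeff_add, Finsupp.add_apply, ← sum_add_distrib]
    exact sum_congr rfl fun σ _ => by split_ifs <;> ring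
  map_smul' q a := by
    ext u
    simp only [cup_coeff, coeff_smul, Finsupp.smul_apply, smul_eq_mul, mul_sum, RingHom.id_apply]
    exact sum_congr rfl fun σ _ => by split_ifs <;> ring

lemma IsClassFun.cup {f a : ℚ[𝔖 N]} (hf : IsClassFun f) (ha : IsClassFun a) :
    IsClassFun (cup f a) := by
  intro c u
  rw [cup_coeff, cup_coeff, ← (MulAut.conj c).toEquiv.sum_comp]
  refine sum_congr rfl fun σ _ => ?_
  have hconj : (c * σ * c⁻¹)⁻¹ * (c * u * c⁻¹) = c * (σ⁻¹ * u) * c⁻¹ := by group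
  simp only [MulEquiv.toEquiv_eq_coe, MulEquiv.coe_toEquiv, MulAut.conj_apply, hconj,
    permDeg_conj, hf c, ha c]

open scoped Classical in
lemma tau_coeff (σ : Perm (Fin N)) : (tau N).coeff σ = if σ.IsSwap then 1 else 0 := by
  simp [tau, coeff_sum, Finsupp.single_apply]

lemma isClassFun_tau : IsClassFun (tau N) := by
  intro c σ
  have h : (c * σ * c⁻¹).IsSwap ↔ σ.IsSwap := by
    rw [← card_support_eq_two, ← card_support_eq_two, card_support_conj]
  classical
  simp only [tau_coeff, h]

lemma tau_coeff_nonneg (σ : Perm (Fin N)) : 0 ≤ (tau N).coeff σ := by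
  classical
  rw [tau_coeff]
  split_ifs <;> norm_num

lemma classIndicator_coeff_nonneg (ρ u : Perm (Fin N)) : 0 ≤ (classIndicator ρ).coeff u := by
  rw [classIndicator_coeff]
  split_ifs <;> norm_num

lemma cup_tau_classIndicator_coeff_ne_zero {g : Perm (Fin N)} {z : Fin N} (hz : g z ≠ z) :
    (cup (tau N) (classIndicator (swap z (g z) * g))).coeff g ≠ 0 := by
  classical
  rw [cup_coeff]
  refine (sum_pos' (fun σ _ => ?_) ⟨swap z (g z), mem_univ _, ?_⟩).ne'
  · split_ifs
    · exact mul_nonneg (tau_coeff_nonneg σ) (classIndicator_coeff_nonneg _ _)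
    · rfl
  · rw [swap_inv,
      if_pos (permDeg_swap_add_permDeg_swap_mul hz.symm (sameCycle_apply_right.2 .rfl)),
      tau_coeff, if_pos ⟨z, g z, hz.symm, rfl⟩, classIndicator_coeff, if_pos (IsConj.refl _)]
    norm_num

lemma exists_isConj_swap_mul_of_cup_tau_coeff_ne_zero {ρ u : Perm (Fin N)}
    (h : (cup (tau N) (classIndicator ρ)).coeff u ≠ 0) :
    ∃ x y : Fin N, IsConj ρ (swap x y * u) := by
  classical
  rw [cup_coeff] at h
  obtain ⟨σ, -, hσ⟩ := exists_ne_zero_of_sum_ne_zero h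
  rw [ite_ne_right_iff, mul_ne_zero_iff, tau_coeff, classIndicator_coeff] at hσ
  obtain ⟨-, hswap, hconj⟩ := hσ
  obtain ⟨x, y, -, rfl⟩ := (ite_ne_right_iff.1 hswap).1
  exact ⟨x, y, by simpa [swap_inv] using (ite_ne_right_iff.1 hconj).1⟩

lemma iotaPerm_injective : Function.Injective (iotaPerm n) :=
  extendDomainHom_injective _

lemma coeff_iota_iotaPerm (b : ℚ[𝔖 n]) (σ : Perm (Fin n)) :
    (iota n b).coeff (iotaPerm n σ) = b.coeff σ :=
  Finsupp.mapDomain_apply iotaPerm_injective _ _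

lemma coeff_iota_of_notMem_range (b : ℚ[𝔖 n]) {w : Perm (Fin (n + 1))}
    (hw : w ∉ Set.range (iotaPerm n)) : (iota n b).coeff w = 0 :=
  Finsupp.mapDomain_of_notMem_range _ _ hw

lemma exists_isConj_iotaPerm {g : Perm (Fin (n + 1))} {p : Fin (n + 1)} (hp : g p = p) :
    ∃ σ, IsConj (iotaPerm n σ) g := by
  have hsupp : #g.support ≤ n := by
    have : g.support ⊆ univ.erase p := fun x hx =>
      mem_erase.2 ⟨fun h => mem_support.1 hx (h ▸ hp), mem_univ x⟩
    simpa using card_le_card this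
  obtain ⟨σ, hσ⟩ := (exists_with_cycleType_iff (Fin n) (m := g.cycleType)).2
    ⟨by rw [sum_cycleType, Fintype.card_fin]; exact hsupp, fun _ => two_le_of_mem_cycleType⟩
  exact ⟨σ, isConj_iff_cycleType_eq.2 ((cycleType_extendDomain _).trans hσ)⟩

lemma r1_coeff (b : ℚ[𝔖 n]) (u : Perm (Fin (n + 1))) :
    (r1 n b).coeff u = (n.factorial : ℚ)⁻¹ * ∑ t, (iota n b).coeff (t⁻¹ * u * t) := by
  simp only [r1, coeff_smul, coeff_sum, Finsupp.smul_apply, Finset.sum_apply', smul_eq_mul,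
    coeff_mul_single_apply, coeff_single_mul_apply, inv_inv, one_mul, mul_one, mul_assoc]

lemma isClassFun_r1 (b : ℚ[𝔖 n]) : IsClassFun (r1 n b) := by
  intro c u
  rw [r1_coeff, r1_coeff]
  congr 1
  refine Fintype.sum_equiv (Equiv.mulLeft c⁻¹) _ _ fun t => ?_
  simp only [coe_mulLeft, mul_inv_rev, inv_inv, mul_assoc]

def r1Linear (n : ℕ) : ℚ[𝔖 n] →ₗ[ℚ] ℚ[𝔖 (n + 1)] where
  toFun := r1 n
  map_add' a b := by
    ext u
    simp only [r1_coeff, iota, coeff_add, Finsupp.add_apply, Finsupp.mapDomain_add,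
      sum_add_distrib, mul_add]
  map_smul' q a := by
    ext u
    simp only [r1_coeff, iota, coeff_smul, Finsupp.smul_apply, Finsupp.mapDomain_smul,
      smul_eq_mul, mul_sum, RingHom.id_apply]
    exact sum_congr rfl fun _ _ => mul_left_comm _ _ _

lemma coeff_iota_nonneg {b : ℚ[𝔖 n]} (hb : ∀ σ, 0 ≤ b.coeff σ) (w : Perm (Fin (n + 1))) :
    0 ≤ (iota n b).coeff w := by
  by_cases hw : w ∈ Set.range (iotaPerm n)
  · obtain ⟨σ, rfl⟩ := hw
    rw [coeff_iota_iotaPerm]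
    exact hb σ
  · rw [coeff_iota_of_notMem_range b hw]

/-- The paper's `τ_{n+1} ∪ C(S_{n+1}) + r₁(C(S_n))`. -/
def cupTauSupR1 (n : ℕ) : Submodule ℚ ℚ[𝔖 (n + 1)] :=
  (classFunctions (n + 1)).map (cupLeft (tau (n + 1))) ⊔ (classFunctions n).map (r1Linear n)

lemma classIndicator_mem_of_apply_eq_self {g : Perm (Fin (n + 1))} {p : Fin (n + 1)}
    (hp : g p = p) : classIndicator g ∈ cupTauSupR1 n := by
  obtain ⟨σ, hσ⟩ := exists_isConj_iotaPerm hp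
  have hr1 : r1 n (classIndicator σ) ∈ cupTauSupR1 n :=
    Submodule.mem_sup_right
      (Submodule.mem_map_of_mem (f := r1Linear n) (isClassFun_classIndicator σ))
  refine classIndicator_mem_of_coeff_ne_zero (isClassFun_r1 _) hr1 ?_ fun u hu hgu => absurd ?_ hgu
  · rw [← (isClassFun_r1 _).coeff_eq_of_isConj hσ, r1_coeff]
    refine mul_ne_zero (by positivity) (sum_pos' (fun t _ => ?_) ⟨1, mem_univ _, ?_⟩).ne'
    · exact coeff_iota_nonneg (classIndicator_coeff_nonneg σ) _
    · rw [inv_one, one_mul, mul_one, coeff_iota_iotaPerm, classIndicator_coeff, if_pos (.refl σ)]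
      norm_num
  · rw [r1_coeff] at hu
    obtain ⟨t, -, ht⟩ := exists_ne_zero_of_sum_ne_zero (right_ne_zero_of_mul hu)
    by_cases hw : t⁻¹ * u * t ∈ Set.range (iotaPerm n)
    · obtain ⟨τ, hτ⟩ := hw
      rw [← hτ, coeff_iota_iotaPerm, classIndicator_coeff, ite_ne_right_iff] at ht
      have hιτ : IsConj (iotaPerm n τ) u := isConj_iff.2 ⟨t, by rw [hτ]; group⟩
      exact hσ.symm.trans (((extendDomainHom _).map_isConj ht.1).trans hιτ)
    · exact absurd (coeff_iota_of_notMem_range _ hw) ht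

theorem classIndicator_mem_cupTauSupR1 (g : Perm (Fin (n + 1))) :
    classIndicator g ∈ cupTauSupR1 n := by
  suffices h : ∀ k (g : Perm (Fin (n + 1))) z, #(g.orbitFinset z) = k →
      classIndicator g ∈ cupTauSupR1 n from h _ g 0 rfl
  intro k
  induction k using Nat.strong_induction_on with
  | _ k ih =>
  intro g z hk
  by_cases hfix : ∃ p, g p = p
  · obtain ⟨p, hp⟩ := hfix
    exact classIndicator_mem_of_apply_eq_self hp
  have hz : g z ≠ z := fun h => hfix ⟨z, h⟩
  refine classIndicator_mem_of_coeff_ne_zero (isClassFun_tau.cup (isClassFun_classIndicator _))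
    (Submodule.mem_sup_left (Submodule.mem_map_of_mem (isClassFun_classIndicator _)))
    (cup_tau_classIndicator_coeff_ne_zero hz) fun u hu hgu => ?_
  obtain ⟨x, y, hxy⟩ := exists_isConj_swap_mul_of_cup_tau_coeff_ne_zero hu
  rcases exists_fixed_or_isConj_or_exists_card_orbitFinset_lt hz hxy with
    ⟨p, hp⟩ | hgu' | ⟨w, hw⟩
  · exact classIndicator_mem_of_apply_eq_self hp
  · exact absurd hgu' hgu
  · exact ih _ (hk ▸ hw) u w rfl

end GroupRing

/-- For every `n ≥ 1`, `C(S_n) ⊗ ℚ = τ_n ∪ (C(S_n) ⊗ ℚ) + r_1(C(S_{n-1}) ⊗ ℚ)`: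
every rational class function on `S_{n+1}` is the sum of a cup product of
`τ_{n+1}` with a rational class function on `S_{n+1}` and the image under `r_1`
of a rational class function on `S_n`. -/
theorem classFun_decomposition (n : ℕ)
    (y : MonoidAlgebra ℚ (Equiv.Perm (Fin (n + 1)))) (hy : IsClassFun y) :
    ∃ a : MonoidAlgebra ℚ (Equiv.Perm (Fin (n + 1))), IsClassFun a ∧
    ∃ b : MonoidAlgebra ℚ (Equiv.Perm (Fin n)), IsClassFun b ∧
      y = cup (tau (n + 1)) a + r1 n b := by
  obtain ⟨_, ⟨a, ha, rfl⟩, _, ⟨b, hb, rfl⟩, hab⟩ :=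
    Submodule.mem_sup.1 (mem_of_isClassFun hy fun u _ => classIndicator_mem_cupTauSupR1 u)
  exact ⟨a, ha, b, hb, hab.symm⟩

end
end

section
/- For every d ≥ 0, the product over all partitions λ = (1^{α_1} 2^{α_2} ⋯) of d of the quantity ∏_{i≥1} i^{α_i}/α_i! equals 1; that is, ∏_{λ ⊢ d} ∏_{i≥1} i^{α_i(λ)} / α_i(λ)! = 1, where α_i(λ) is the number of parts of λ equal to i. -/
open Finset

private def pset (d i k : ℕ) : Finset (Nat.Partition d) :=
  Finset.univ.filter (fun lam => k ≤ lam.parts.count i)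

private lemma pset_symm (d : ℕ) {i k : ℕ} (hi : 1 ≤ i) (hk : 1 ≤ k) :
    (pset d i k).card = (pset d k i).card := by
  have key : ∀ (i k : ℕ), 1 ≤ i → 1 ≤ k → ∀ lam : Nat.Partition d,
      k ≤ lam.parts.count i →
      ∃ mu : Nat.Partition d,
        mu.parts = lam.parts - Multiset.replicate k i + Multiset.replicate i k := by
    intro i k hi hk lam hcount
    have hle : Multiset.replicate k i ≤ lam.parts :=
      Multiset.le_count_iff_replicate_le.mp hcount
    refine ⟨⟨lam.parts - Multiset.replicate k i + Multiset.replicate i k, ?_, ?_⟩, rfl⟩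
    · intro j hj
      rcases Multiset.mem_add.mp hj with h | h
      · exact lam.parts_pos (Multiset.mem_of_le (Multiset.sub_le_self _ _) h)
      · rw [Multiset.eq_of_mem_replicate h]; exact hk
    · have h1 : (lam.parts - Multiset.replicate k i).sum + (Multiset.replicate k i).sum
          = lam.parts.sum := by
        rw [← Multiset.sum_add, tsub_add_cancel_of_le hle]
      simp only [Multiset.sum_add, Multiset.sum_replicate, smul_eq_mul] at h1 ⊢
      rw [mul_comm i k, h1, lam.parts_sum]
  have count_new : ∀ (i k : ℕ), i ≠ k → ∀ s : Multiset ℕ,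
      (s - Multiset.replicate k i + Multiset.replicate i k).count k = s.count k + i := by
    intro i k hne s
    rw [Multiset.count_add, Multiset.count_sub, Multiset.count_replicate,
      Multiset.count_replicate]
    simp [hne, Ne.symm hne]
  refine Finset.card_bij'
    (fun lam hlam => (key i k hi hk lam (by simpa [pset] using hlam)).choose)
    (fun mu hmu => (key k i hk hi mu (by simpa [pset] using hmu)).choose)
    ?_ ?_ ?_ ?_
  · intro lam hlam
    have hcount : k ≤ lam.parts.count i := by simpa [pset] using hlam
    have hspec := (key i k hi hk lam hcount).choose_spec
    simp only [pset, mem_filter, mem_univ, true_and]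
    rw [hspec]
    by_cases hik : i = k
    · subst hik
      rw [Multiset.count_add, Multiset.count_sub, Multiset.count_replicate]
      simp only [if_pos rfl]
      omega
    · rw [count_new i k hik]; omega
  · intro mu hmu
    have hcount : i ≤ mu.parts.count k := by simpa [pset] using hmu
    have hspec := (key k i hk hi mu hcount).choose_spec
    simp only [pset, mem_filter, mem_univ, true_and]
    rw [hspec]
    by_cases hik : i = k
    · subst hik
      rw [Multiset.count_add, Multiset.count_sub, Multiset.count_replicate]
      simp only [if_pos rfl]
      omega
    · rw [count_new k i (Ne.symm hik)]; omega
  · intro lam hlam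
    have hcount : k ≤ lam.parts.count i := by simpa [pset] using hlam
    have hle : Multiset.replicate k i ≤ lam.parts :=
      Multiset.le_count_iff_replicate_le.mp hcount
    have hspec := (key i k hi hk lam hcount).choose_spec
    set mu := (key i k hi hk lam hcount).choose
    have hcount2 : i ≤ mu.parts.count k := by
      rw [hspec]
      by_cases hik : i = k
      · subst hik
        rw [Multiset.count_add, Multiset.count_sub, Multiset.count_replicate]
        simp only [if_pos rfl]; omega
      · rw [count_new i k hik]; omega
    have hspec2 := (key k i hk hi mu hcount2).choose_spec
    apply Nat.Partition.ext
    rw [hspec2, hspec, add_tsub_cancel_right, tsub_add_cancel_of_le hle]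
  · intro mu hmu
    have hcount : i ≤ mu.parts.count k := by simpa [pset] using hmu
    have hle : Multiset.replicate i k ≤ mu.parts :=
      Multiset.le_count_iff_replicate_le.mp hcount
    have hspec := (key k i hk hi mu hcount).choose_spec
    set lam := (key k i hk hi mu hcount).choose
    have hcount2 : k ≤ lam.parts.count i := by
      rw [hspec]
      by_cases hik : i = k
      · subst hik
        rw [Multiset.count_add, Multiset.count_sub, Multiset.count_replicate]
        simp only [if_pos rfl]; omega
      · rw [count_new k i (Ne.symm hik)]; omega
    have hspec2 := (key i k hi hk lam hcount2).choose_spec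
    apply Nat.Partition.ext
    rw [hspec2, hspec, add_tsub_cancel_right, tsub_add_cancel_of_le hle]

private lemma count_le_d (d : ℕ) (lam : Nat.Partition d) (i : ℕ) :
    lam.parts.count i ≤ d := by
  calc lam.parts.count i ≤ Multiset.card lam.parts := Multiset.count_le_card _ _
    _ ≤ lam.parts.sum := by
        have := Multiset.card_nsmul_le_sum (s := lam.parts) (a := 1)
          (fun x hx => lam.parts_pos hx)
        simpa using this
    _ = d := lam.parts_sum

private lemma filter_Icc_le (d n : ℕ) (hn : n ≤ d) :
    Finset.filter (fun k => k ≤ n) (Finset.Icc 1 d) = Finset.Icc 1 n := by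
  ext x
  simp only [Finset.mem_filter, Finset.mem_Icc]
  exact ⟨fun ⟨⟨h1, _⟩, h3⟩ => ⟨h1, h3⟩, fun ⟨h1, h2⟩ => ⟨⟨h1, h2.trans hn⟩, h2⟩⟩

/-- For every `d ≥ 0`, the product over all partitions
`λ = (1^{α_1} 2^{α_2} ⋯)` of `d` of `∏_{i≥1} i^{α_i}/α_i!` equals `1`.
Here `α_i(λ) = λ.parts.count i` and the inner product is taken over
`1 ≤ i ≤ d` (parts of a partition of `d` are at most `d`, so all other
factors are `1`). -/
theorem prod_partitions_eq_one (d : ℕ) :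
    ∏ lam : Nat.Partition d, ∏ i ∈ Finset.Icc 1 d,
      ((i : ℚ) ^ (lam.parts.count i) / ((lam.parts.count i).factorial : ℚ)) = 1 := by
  -- factorial as a product over Icc 1 d with indicator
  have hfact : ∀ (lam : Nat.Partition d) (i : ℕ),
      ((lam.parts.count i).factorial : ℚ)
        = ∏ k ∈ Icc 1 d, (if k ≤ lam.parts.count i then (k : ℚ) else 1) := by
    intro lam i
    rw [← Finset.prod_filter, filter_Icc_le d _ (count_le_d d lam i), ← Nat.cast_prod]
    congr 1
    rw [← Finset.Ico_add_one_right_eq_Icc, Finset.prod_Ico_id_eq_factorial]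
  -- count as a sum over Icc 1 d with indicator
  have hcount : ∀ (lam : Nat.Partition d) (i : ℕ),
      lam.parts.count i
        = ∑ k ∈ Icc 1 d, (if k ≤ lam.parts.count i then 1 else 0) := by
    intro lam i
    rw [← Finset.card_filter, filter_Icc_le d _ (count_le_d d lam i), Nat.card_Icc]
    omega
  have split : ∏ lam : Nat.Partition d, ∏ i ∈ Icc 1 d,
      ((i : ℚ) ^ (lam.parts.count i) / ((lam.parts.count i).factorial : ℚ))
      = (∏ lam : Nat.Partition d, ∏ i ∈ Icc 1 d, (i : ℚ) ^ (lam.parts.count i))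
        / (∏ lam : Nat.Partition d, ∏ i ∈ Icc 1 d,
            ((lam.parts.count i).factorial : ℚ)) := by
    rw [← Finset.prod_div_distrib]
    exact Finset.prod_congr rfl (fun lam _ => by rw [← Finset.prod_div_distrib])
  rw [split]
  have hden_ne : (∏ lam : Nat.Partition d, ∏ i ∈ Icc 1 d,
      ((lam.parts.count i).factorial : ℚ)) ≠ 0 := by
    apply Finset.prod_ne_zero_iff.mpr
    intro lam _
    apply Finset.prod_ne_zero_iff.mpr
    intro i _
    exact_mod_cast (Nat.factorial_pos _).ne'
  rw [div_eq_one_iff_eq hden_ne]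
  -- numerator
  have hnum : (∏ lam : Nat.Partition d, ∏ i ∈ Icc 1 d, (i : ℚ) ^ (lam.parts.count i))
      = ∏ i ∈ Icc 1 d, ∏ k ∈ Icc 1 d, (i : ℚ) ^ (pset d i k).card := by
    rw [Finset.prod_comm]
    refine Finset.prod_congr rfl (fun i _ => ?_)
    rw [Finset.prod_pow_eq_pow_sum, Finset.prod_pow_eq_pow_sum]
    congr 1
    rw [Finset.sum_congr rfl (fun lam _ => hcount lam i), Finset.sum_comm]
    refine Finset.sum_congr rfl (fun k _ => ?_)
    rw [← Finset.card_filter]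
    rfl
  -- denominator
  have hden : (∏ lam : Nat.Partition d, ∏ i ∈ Icc 1 d,
      ((lam.parts.count i).factorial : ℚ))
      = ∏ i ∈ Icc 1 d, ∏ k ∈ Icc 1 d, (k : ℚ) ^ (pset d i k).card := by
    rw [Finset.prod_comm]
    refine Finset.prod_congr rfl (fun i _ => ?_)
    rw [Finset.prod_congr rfl (fun lam _ => hfact lam i), Finset.prod_comm]
    refine Finset.prod_congr rfl (fun k _ => ?_)
    rw [← Finset.prod_filter, Finset.prod_const]
    rfl
  rw [hnum, hden, Finset.prod_comm]
  refine Finset.prod_congr rfl (fun i hi => ?_)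
  refine Finset.prod_congr rfl (fun k hk => ?_)
  rw [pset_symm d (Finset.mem_Icc.mp hk).1 (Finset.mem_Icc.mp hi).1]
end
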